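/- arXiv:2508.04991 — 2 statements merged into one kernel-verified Lean document; each statement's English description precedes it below -/
import Mathlib

section
/- Let f = (f_1,…,f_q) be a vector polynomial and S ⊆ ℝⁿ a nonempty closed set with S_∞ ⊆ {x ∈ ℝⁿ : (f_i)^∞(x) ≤ 0 for all i}. Then: (i) SOL^s(S_∞, f^∞) = ∅ if and only if 0 ∉ SOL^s(S_∞, f^∞); (ii) SOL^w(S_∞, f^∞) = ∅ if and only if 0 ∉ SOL^w(S_∞, f^∞). -/
open Filter Topology MvPolynomial Bornology

noncomputable section

/-- The asymptotic (recession) cone of a set `A ⊆ ℝⁿ`. -/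
def asymCone {n : ℕ} (A : Set (Fin n → ℝ)) : Set (Fin n → ℝ) :=
  {v | ∃ (t : ℕ → ℝ) (x : ℕ → (Fin n → ℝ)),
    Filter.Tendsto t Filter.atTop Filter.atTop ∧ (∀ k, x k ∈ A) ∧
    Filter.Tendsto (fun k => (t k)⁻¹ • x k) Filter.atTop (nhds v)}

/-- Pareto efficient solutions of the vector map `g` on `C`. -/
def SOLs {n q : ℕ} (C : Set (Fin n → ℝ)) (g : Fin q → (Fin n → ℝ) → ℝ) :
    Set (Fin n → ℝ) :=
  {x | x ∈ C ∧ ¬ ∃ y ∈ C, (∀ i, g i y ≤ g i x) ∧ (∃ i, g i y ≠ g i x)}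

/-- Weak Pareto efficient solutions of the vector map `g` on `C`. -/
def SOLw {n q : ℕ} (C : Set (Fin n → ℝ)) (g : Fin q → (Fin n → ℝ) → ℝ) :
    Set (Fin n → ℝ) :=
  {x | x ∈ C ∧ ¬ ∃ y ∈ C, ∀ i, g i y < g i x}

/-- Global minimizers of a scalar function `p` on `C`. -/
def SOLmin {n : ℕ} (C : Set (Fin n → ℝ)) (p : (Fin n → ℝ) → ℝ) :
    Set (Fin n → ℝ) :=
  {x | x ∈ C ∧ ∀ y ∈ C, p x ≤ p y}

/-- The recession polynomial (leading term: top-degree homogeneous part) of a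
polynomial, as a function on `ℝⁿ`. -/
noncomputable def recPoly {n : ℕ} (p : MvPolynomial (Fin n) ℝ) : (Fin n → ℝ) → ℝ :=
  fun x => MvPolynomial.eval x (MvPolynomial.homogeneousComponent p.totalDegree p)

/-! Recession polynomials are homogeneous of degree at least one and asymptotic cones are cones,
so scaling a point by `t > 0` scales the `i`-th objective by `t ^ dᵢ`. Since the objectives are
nonpositive on the cone, a Pareto efficient point `x` is a common zero (if `gᵢ x < 0`, then `2 • x`
dominates it), so it has the same objective values as `0`, which is then efficient too. For weak
efficiency, a point `y` strictly dominating `0` has all objective values negative, and `t • y`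
strictly dominates every point of the cone once `t` is large. -/

lemma MvPolynomial.IsHomogeneous.eval_smul {σ R : Type*} [CommSemiring R] {m : ℕ}
    {φ : MvPolynomial σ R} (hφ : φ.IsHomogeneous m) (c : R) (x : σ → R) :
    eval (c • x) φ = c ^ m * eval x φ := by
  rw [eval_eq, eval_eq, Finset.mul_sum]
  refine Finset.sum_congr rfl fun e he => ?_
  have hdeg : ∑ i ∈ e.support, e i = m := by
    simpa [Finsupp.weight_apply, Finsupp.sum] using hφ (mem_support_iff.mp he)
  simp only [Pi.smul_apply, smul_eq_mul, mul_pow, Finset.prod_mul_distrib,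
    Finset.prod_pow_eq_pow_sum, hdeg]
  ring

lemma recPoly_smul {n : ℕ} (p : MvPolynomial (Fin n) ℝ) (c : ℝ) (x : Fin n → ℝ) :
    recPoly p (c • x) = c ^ p.totalDegree * recPoly p x :=
  (homogeneousComponent_isHomogeneous _ _).eval_smul c x

lemma zero_mem_asymCone {n : ℕ} {S : Set (Fin n → ℝ)} (hS : S.Nonempty) :
    (0 : Fin n → ℝ) ∈ asymCone S := by
  obtain ⟨x₀, hx₀⟩ := hS
  have ht : Tendsto (fun k : ℕ => (k : ℝ) + 1) atTop atTop :=
    tendsto_atTop_add_const_right _ 1 tendsto_natCast_atTop_atTop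
  refine ⟨_, fun _ => x₀, ht, fun _ => hx₀, ?_⟩
  simpa using (tendsto_inv_atTop_zero.comp ht).smul_const x₀

lemma smul_mem_asymCone {n : ℕ} {S : Set (Fin n → ℝ)} {v : Fin n → ℝ} {c : ℝ}
    (hc : 0 < c) (hv : v ∈ asymCone S) : c • v ∈ asymCone S := by
  obtain ⟨t, x, ht, hx, hlim⟩ := hv
  refine ⟨fun k => t k / c, x, ht.atTop_div_const hc, hx, ?_⟩
  simp_rw [inv_div, div_eq_mul_inv, ← smul_smul]
  exact hlim.const_smul c

section ParetoOnCones

variable {n q : ℕ} {C : Set (Fin n → ℝ)} {g : Fin q → (Fin n → ℝ) → ℝ} {x y : Fin n → ℝ}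

lemma mem_SOLs_of_eq (hx : x ∈ SOLs C g) (hy : y ∈ C) (hxy : ∀ i, g i y = g i x) :
    y ∈ SOLs C g := by
  refine ⟨hy, fun ⟨z, hz, hle, hne⟩ => hx.2 ⟨z, hz, ?_, ?_⟩⟩
  · simpa only [hxy] using hle
  · simpa only [hxy] using hne

variable {d : Fin q → ℕ}

lemma map_zero_of_homogeneous (hd : ∀ i, 1 ≤ d i) (hg : ∀ i c x, g i (c • x) = c ^ d i * g i x)
    (i : Fin q) : g i 0 = 0 := by
  simpa [zero_pow (by linarith [hd i] : d i ≠ 0)] using hg i 0 0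

variable (hC : ∀ c : ℝ, 0 < c → ∀ x ∈ C, c • x ∈ C)
  (hd : ∀ i, 1 ≤ d i) (hg : ∀ i c x, g i (c • x) = c ^ d i * g i x)
include hC hd hg

-- If `g i x < 0`, then `2 • x` dominates `x`.
lemma eq_zero_of_mem_SOLs (hnonpos : C ⊆ {x | ∀ i, g i x ≤ 0}) (hx : x ∈ SOLs C g) (i : Fin q) :
    g i x = 0 := by
  by_contra hne
  have hscale : ∀ j, 1 ≤ (2 : ℝ) ^ d j := fun j => one_le_pow₀ one_le_two
  refine hx.2 ⟨(2 : ℝ) • x, hC 2 two_pos x hx.1, fun j => ?_, i, ?_⟩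
  · rw [hg]
    nlinarith [hnonpos hx.1 j, hscale j]
  · have hlt : g i x < 0 := lt_of_le_of_ne (hnonpos hx.1 i) hne
    have h2 : (2 : ℝ) ≤ 2 ^ d i := le_self_pow₀ one_le_two (by linarith [hd i])
    rw [hg]
    nlinarith

lemma SOLs_eq_empty_iff_zero_notMem (h0 : (0 : Fin n → ℝ) ∈ C)
    (hnonpos : C ⊆ {x | ∀ i, g i x ≤ 0}) : SOLs C g = ∅ ↔ (0 : Fin n → ℝ) ∉ SOLs C g := by
  refine ⟨fun h => h ▸ Set.notMem_empty 0, fun hnot => ?_⟩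
  refine Set.eq_empty_of_forall_notMem fun x hx => hnot (mem_SOLs_of_eq hx h0 fun i => ?_)
  rw [eq_zero_of_mem_SOLs hC hd hg hnonpos hx, map_zero_of_homogeneous hd hg]

-- `t • y` strictly dominates `x` once `t` is large, since `t ^ d i * g i y → -∞`.
lemma SOLw_eq_empty_of_forall_neg (hy : y ∈ C) (hneg : ∀ i, g i y < 0) : SOLw C g = ∅ := by
  refine Set.eq_empty_of_forall_notMem fun x hx => ?_
  have hlarge : ∀ᶠ t : ℝ in atTop, 0 < t ∧ ∀ i, t ^ d i * g i y < g i x := by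
    refine (eventually_gt_atTop 0).and (eventually_all.2 fun i => ?_)
    exact ((tendsto_pow_atTop (by linarith [hd i])).atTop_mul_const_of_neg (hneg i)).eventually
      (eventually_lt_atBot _)
  obtain ⟨t, htpos, hdom⟩ := hlarge.exists
  exact hx.2 ⟨t • y, hC t htpos y hy, fun i => (hg i t y).symm ▸ hdom i⟩

lemma SOLw_eq_empty_iff_zero_notMem (h0 : (0 : Fin n → ℝ) ∈ C) :
    SOLw C g = ∅ ↔ (0 : Fin n → ℝ) ∉ SOLw C g := by
  refine ⟨fun h => h ▸ Set.notMem_empty 0, fun hnot => ?_⟩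
  obtain ⟨y, hy, hlt⟩ := not_and_not_right.mp hnot h0
  refine SOLw_eq_empty_of_forall_neg hC hd hg hy fun i => ?_
  simpa only [map_zero_of_homogeneous hd hg] using hlt i

end ParetoOnCones

theorem stmt1_general {n q : ℕ} (f : Fin q → MvPolynomial (Fin n) ℝ)
    (hdeg : ∀ i, 1 ≤ (f i).totalDegree)
    (S : Set (Fin n → ℝ)) (hSne : S.Nonempty)
    (hsub : asymCone S ⊆ {x | ∀ i, recPoly (f i) x ≤ 0}) :
    (SOLs (asymCone S) (fun i => recPoly (f i)) = ∅ ↔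
      (0 : Fin n → ℝ) ∉ SOLs (asymCone S) (fun i => recPoly (f i))) ∧
    (SOLw (asymCone S) (fun i => recPoly (f i)) = ∅ ↔
      (0 : Fin n → ℝ) ∉ SOLw (asymCone S) (fun i => recPoly (f i))) := by
  have hcone : ∀ c : ℝ, 0 < c → ∀ x ∈ asymCone S, c • x ∈ asymCone S :=
    fun _ hc _ hx => smul_mem_asymCone hc hx
  have hhom : ∀ i c x, recPoly (f i) (c • x) = c ^ (f i).totalDegree * recPoly (f i) x :=
    fun i => recPoly_smul (f i)
  have h0 := zero_mem_asymCone hSne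
  exact ⟨SOLs_eq_empty_iff_zero_notMem hcone hdeg hhom h0 hsub,
    SOLw_eq_empty_iff_zero_notMem hcone hdeg hhom h0⟩

theorem stmt1 {n q : ℕ} (f : Fin q → MvPolynomial (Fin n) ℝ)
    (hdeg : ∀ i, 1 ≤ (f i).totalDegree)
    (S : Set (Fin n → ℝ)) (hSne : S.Nonempty) (hScl : IsClosed S)
    (hsub : asymCone S ⊆ {x | ∀ i, recPoly (f i) x ≤ 0}) :
    (SOLs (asymCone S) (fun i => recPoly (f i)) = ∅ ↔
      (0 : Fin n → ℝ) ∉ SOLs (asymCone S) (fun i => recPoly (f i))) ∧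
    (SOLw (asymCone S) (fun i => recPoly (f i)) = ∅ ↔
      (0 : Fin n → ℝ) ∉ SOLw (asymCone S) (fun i => recPoly (f i))) :=
  stmt1_general f hdeg S hSne hsub
end
end

section
/- Let K ⊆ ℝⁿ be a nonempty closed set and f = (f_1,…,f_q) a vector polynomial. (i) If SOL^s(K, f) ≠ ∅, then there exist x̄ ∈ K and a nonempty closed set S ⊆ ℝⁿ with (K_x̄)_∞ ⊆ S_∞ ⊆ K_∞ such that SOL(S_∞, (Σ_{i=1}^q λ_i f_i)^∞) ≠ ∅ for every λ ∈ ℝ^q with λ_i ≥ 0 for all i and λ ≠ 0. (ii) If SOL^w(K, f) ≠ ∅, then there exist x̄ ∈ K, a nonempty closed set S ⊆ ℝⁿ with (K_x̄)_∞ ⊆ S_∞ ⊆ K_∞, and λ ∈ ℝ^q with λ_i ≥ 0 for all i and λ ≠ 0 such that SOL(S_∞, (Σ_{i=1}^q λ_i f_i)^∞) ≠ ∅. -/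
/-!
The sublevel set `K_x̄` itself serves as `S`. At a Pareto solution `x̄` every `f_i` is constant on
`K_x̄`; from a weak Pareto solution, shrinking the sublevel set at most `q` times produces an `x̄`
at which some `f_i` is constant on `K_x̄`. If a polynomial `p` of degree `d` takes the value `c`
at points `x_k = t_k u_k` with `t_k → ∞` and `u_k → v`, then
`p^∞(v) = lim t_k^{-d} p(x_k) = lim t_k^{-d} c`. Hence `p^∞` is constant on the asymptotic cone of
any set on which `p` is constant, and every point of that cone is a minimizer.
-/

open Filter Topology MvPolynomial Bornology

noncomputable section

namespace MvPolynomial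

variable {σ : Type*}

theorem IsHomogeneous.eval_smul_s9 {R : Type*} [CommSemiring R] {p : MvPolynomial σ R} {m : ℕ}
    (hp : p.IsHomogeneous m) (t : R) (x : σ → R) : eval (t • x) p = t ^ m * eval x p := by
  rw [eval_eq, eval_eq, Finset.mul_sum]
  refine Finset.sum_congr rfl fun d hd => ?_
  simp only [Pi.smul_apply, smul_eq_mul, mul_pow, Finset.prod_mul_distrib,
    Finset.prod_pow_eq_pow_sum, ← hp.degree_eq_sum_deg_support hd]
  ring

theorem eval_smul_eq_sum_homogeneousComponent {R : Type*} [CommSemiring R]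
    (p : MvPolynomial σ R) (t : R) (x : σ → R) :
    eval (t • x) p = ∑ j ∈ Finset.range (p.totalDegree + 1),
      t ^ j * eval x (homogeneousComponent j p) := by
  conv_lhs => rw [← sum_homogeneousComponent p]
  rw [map_sum]
  exact Finset.sum_congr rfl fun j _ => (homogeneousComponent_isHomogeneous j p).eval_smul_s9 t x

theorem tendsto_inv_pow_mul_eval_smul {ι : Type*} {l : Filter ι} (p : MvPolynomial σ ℝ)
    {t : ι → ℝ} {u : ι → σ → ℝ} {v : σ → ℝ} (ht : Tendsto t l atTop) (hu : Tendsto u l (𝓝 v)) :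
    Tendsto (fun k => (t k)⁻¹ ^ p.totalDegree * eval (t k • u k) p) l
      (𝓝 (eval v (homogeneousComponent p.totalDegree p))) := by
  set d := p.totalDegree
  have expand : ∀ s : ℝ, s ≠ 0 → ∀ y : σ → ℝ, s⁻¹ ^ d * eval (s • y) p =
      ∑ j ∈ Finset.range (d + 1), s⁻¹ ^ (d - j) * eval y (homogeneousComponent j p) := by
    intro s hs y
    rw [eval_smul_eq_sum_homogeneousComponent, Finset.mul_sum]
    refine Finset.sum_congr rfl fun j hj => ?_
    rw [← pow_sub_mul_pow s⁻¹ (Nat.lt_succ_iff.mp (Finset.mem_range.mp hj)), inv_pow s j]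
    field_simp
  have hlim : Tendsto (fun k => ∑ j ∈ Finset.range (d + 1),
      (t k)⁻¹ ^ (d - j) * eval (u k) (homogeneousComponent j p)) l
      (𝓝 (∑ j ∈ Finset.range (d + 1), 0 ^ (d - j) * eval v (homogeneousComponent j p))) :=
    tendsto_finsetSum _ fun j _ =>
      (ht.inv_tendsto_atTop.pow _).mul (((continuous_eval _).tendsto v).comp hu)
  have hvalue : ∑ j ∈ Finset.range (d + 1), (0 : ℝ) ^ (d - j) * eval v (homogeneousComponent j p)
      = eval v (homogeneousComponent d p) := by
    rw [Finset.sum_range_succ, Finset.sum_eq_zero fun j hj => ?_]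
    · simp
    · rw [zero_pow (Nat.sub_ne_zero_of_lt (Finset.mem_range.mp hj)), zero_mul]
  rw [← hvalue]
  refine hlim.congr' ?_
  filter_upwards [ht.eventually_ne_atTop 0] with k hk
  exact (expand (t k) hk (u k)).symm

end MvPolynomial

section AsymptoticCone

variable {n : ℕ}

theorem asymCone_mono {A B : Set (Fin n → ℝ)} (h : A ⊆ B) : asymCone A ⊆ asymCone B := by
  rintro v ⟨t, x, ht, hx, hlim⟩
  exact ⟨t, x, ht, fun k => h (hx k), hlim⟩

theorem zero_mem_asymCone_s9 {A : Set (Fin n → ℝ)} (hA : A.Nonempty) : 0 ∈ asymCone A := by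
  obtain ⟨a, ha⟩ := hA
  refine ⟨fun k : ℕ => (k : ℝ), fun _ => a, tendsto_natCast_atTop_atTop, fun _ => ha, ?_⟩
  simpa using (tendsto_natCast_atTop_atTop (R := ℝ)).inv_tendsto_atTop.smul_const a

theorem recPoly_eq_of_mem_asymCone {A : Set (Fin n → ℝ)} {p : MvPolynomial (Fin n) ℝ} {c : ℝ}
    (hc : ∀ x ∈ A, eval x p = c) {v : Fin n → ℝ} (hv : v ∈ asymCone A) :
    recPoly p v = 0 ^ p.totalDegree * c := by
  obtain ⟨t, x, ht, hxA, hlim⟩ := hv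
  have hconst : Tendsto (fun k => (t k)⁻¹ ^ p.totalDegree * eval (t k • (t k)⁻¹ • x k) p) atTop
      (𝓝 (0 ^ p.totalDegree * c)) := by
    refine ((ht.inv_tendsto_atTop.pow _).mul_const c).congr' ?_
    filter_upwards [ht.eventually_ne_atTop 0] with k hk
    rw [smul_inv_smul₀ hk, hc _ (hxA k), Pi.inv_apply]
  exact tendsto_nhds_unique (tendsto_inv_pow_mul_eval_smul p ht hlim) hconst

theorem SOLmin_asymCone_recPoly_nonempty {A : Set (Fin n → ℝ)} (hA : A.Nonempty)
    {p : MvPolynomial (Fin n) ℝ} {c : ℝ} (hc : ∀ x ∈ A, eval x p = c) :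
    (SOLmin (asymCone A) (recPoly p)).Nonempty :=
  ⟨0, zero_mem_asymCone_s9 hA, fun y hy => by
    rw [recPoly_eq_of_mem_asymCone hc hy, recPoly_eq_of_mem_asymCone hc (zero_mem_asymCone_s9 hA)]⟩

end AsymptoticCone

section Sublevel

variable {X ι β : Type*} [LinearOrder β] {K : Set X} {g : ι → X → β} {b y : X}

def sublevelSet (K : Set X) (g : ι → X → β) (b : X) : Set X :=
  {x ∈ K | ∀ j, g j x ≤ g j b}

theorem sublevelSet_subset : sublevelSet K g b ⊆ K := fun _ hx => hx.1

theorem self_mem_sublevelSet (hb : b ∈ K) : b ∈ sublevelSet K g b := ⟨hb, fun _ => le_rfl⟩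

theorem sublevelSet_subset_of_mem (hy : y ∈ sublevelSet K g b) :
    sublevelSet K g y ⊆ sublevelSet K g b :=
  fun _ hx => ⟨hx.1, fun j => (hx.2 j).trans (hy.2 j)⟩

theorem isClosed_sublevelSet [TopologicalSpace X] [TopologicalSpace β] [OrderClosedTopology β]
    (hK : IsClosed K) (hg : ∀ i, Continuous (g i)) (b : X) : IsClosed (sublevelSet K g b) := by
  have : sublevelSet K g b = K ∩ ⋂ j, {x | g j x ≤ g j b} := by
    ext x; simp [sublevelSet]
  rw [this]
  exact hK.inter (isClosed_iInter fun j => isClosed_le (hg j) continuous_const)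

theorem exists_const_on_sublevelSet [DecidableEq ι] (J : Finset ι) (hb : b ∈ K)
    (hJ : ∀ y ∈ sublevelSet K g b, ∃ i ∈ J, g i y = g i b) :
    ∃ b' ∈ K, ∃ i, ∀ y ∈ sublevelSet K g b', g i y = g i b' := by
  induction J using Finset.strongInduction generalizing b with
  | _ J ih =>
    by_cases hconst : ∃ i ∈ J, ∀ y ∈ sublevelSet K g b, g i y = g i b
    · obtain ⟨i, -, hi⟩ := hconst
      exact ⟨b, hb, i, hi⟩
    push Not at hconst
    obtain ⟨i₁, hi₁J, -⟩ := hJ b (self_mem_sublevelSet hb)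
    obtain ⟨b₁, hb₁, hne⟩ := hconst i₁ hi₁J
    -- Passing to `b₁` strictly lowers `g i₁`, so `i₁` can be dropped from `J`.
    have hlt : g i₁ b₁ < g i₁ b := (hb₁.2 i₁).lt_of_ne hne
    refine ih (J.erase i₁) (Finset.erase_ssubset hi₁J) hb₁.1 fun y hy => ?_
    obtain ⟨i, hiJ, hi⟩ := hJ y (sublevelSet_subset_of_mem hb₁ hy)
    have hi₁ : i ≠ i₁ := by
      rintro rfl
      exact (hy.2 i).not_gt (hi ▸ hlt)
    exact ⟨i, Finset.mem_erase.mpr ⟨hi₁, hiJ⟩, le_antisymm (hy.2 i) (hi ▸ hb₁.2 i)⟩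

end Sublevel

section Pareto

variable {n q : ℕ} {K : Set (Fin n → ℝ)} {g : Fin q → (Fin n → ℝ) → ℝ} {x y : Fin n → ℝ}

theorem eq_of_mem_sublevelSet_of_mem_SOLs (hx : x ∈ SOLs K g) (hy : y ∈ sublevelSet K g x)
    (i : Fin q) : g i y = g i x := by
  by_contra h
  exact hx.2 ⟨y, hy.1, hy.2, i, h⟩

theorem exists_const_on_sublevelSet_of_mem_SOLw (hx : x ∈ SOLw K g) :
    ∃ b ∈ K, ∃ i, ∀ y ∈ sublevelSet K g b, g i y = g i b := by
  refine exists_const_on_sublevelSet Finset.univ hx.1 fun y hy => ?_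
  obtain ⟨i, hi⟩ : ∃ i, g i x ≤ g i y := by
    by_contra! h
    exact hx.2 ⟨y, hy.1, h⟩
  exact ⟨i, Finset.mem_univ i, le_antisymm (hy.2 i) hi⟩

end Pareto

theorem stmt9_general {n q : ℕ} (K : Set (Fin n → ℝ)) (hKcl : IsClosed K)
    (f : Fin q → MvPolynomial (Fin n) ℝ) :
    ((SOLs K (fun i x => eval x (f i))).Nonempty →
      ∃ xbar ∈ K, ∃ S : Set (Fin n → ℝ), S.Nonempty ∧ IsClosed S ∧
        asymCone {x ∈ K | ∀ j, eval x (f j) ≤ eval xbar (f j)} ⊆ asymCone S ∧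
        asymCone S ⊆ asymCone K ∧
        ∀ lam : Fin q → ℝ, (∀ i, 0 ≤ lam i) → lam ≠ 0 →
          (SOLmin (asymCone S)
            (recPoly (∑ i, MvPolynomial.C (lam i) * f i))).Nonempty) ∧
    ((SOLw K (fun i x => eval x (f i))).Nonempty →
      ∃ xbar ∈ K, ∃ S : Set (Fin n → ℝ), S.Nonempty ∧ IsClosed S ∧
        asymCone {x ∈ K | ∀ j, eval x (f j) ≤ eval xbar (f j)} ⊆ asymCone S ∧
        asymCone S ⊆ asymCone K ∧
        ∃ lam : Fin q → ℝ, (∀ i, 0 ≤ lam i) ∧ lam ≠ 0 ∧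
          (SOLmin (asymCone S)
            (recPoly (∑ i, MvPolynomial.C (lam i) * f i))).Nonempty) := by
  set g : Fin q → (Fin n → ℝ) → ℝ := fun i x => eval x (f i)
  have hS : ∀ b ∈ K, (sublevelSet K g b).Nonempty ∧ IsClosed (sublevelSet K g b) :=
    fun b hb => ⟨⟨b, self_mem_sublevelSet hb⟩,
      isClosed_sublevelSet hKcl (fun i => continuous_eval (f i)) b⟩
  constructor
  · rintro ⟨a, ha⟩
    obtain ⟨hne, hcl⟩ := hS a ha.1
    refine ⟨a, ha.1, sublevelSet K g a, hne, hcl, subset_rfl, asymCone_mono sublevelSet_subset,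
      fun lam _ _ => SOLmin_asymCone_recPoly_nonempty hne
        (c := ∑ i, lam i * g i a) fun y hy => ?_⟩
    simp only [map_sum, eval_mul, eval_C]
    exact Finset.sum_congr rfl fun i _ => by rw [← eq_of_mem_sublevelSet_of_mem_SOLs ha hy i]
  · rintro ⟨a, ha⟩
    obtain ⟨b, hb, i, hconst⟩ := exists_const_on_sublevelSet_of_mem_SOLw ha
    have hsum : ∑ j, C ((Pi.single i 1 : Fin q → ℝ) j) * f j = f i := by
      rw [Fintype.sum_eq_single i fun j hj => by simp [hj]]
      simp
    have hlam : 0 ≤ (Pi.single i 1 : Fin q → ℝ) := Pi.single_nonneg.mpr zero_le_one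
    obtain ⟨hne, hcl⟩ := hS b hb
    refine ⟨b, hb, sublevelSet K g b, hne, hcl, subset_rfl, asymCone_mono sublevelSet_subset,
      Pi.single i 1, hlam, by simp, ?_⟩
    rw [hsum]
    exact SOLmin_asymCone_recPoly_nonempty hne hconst

theorem stmt9 {n q : ℕ} (K : Set (Fin n → ℝ)) (hKne : K.Nonempty) (hKcl : IsClosed K)
    (f : Fin q → MvPolynomial (Fin n) ℝ) (hdeg : ∀ i, 1 ≤ (f i).totalDegree) :
    ((SOLs K (fun i x => eval x (f i))).Nonempty →
      ∃ xbar ∈ K, ∃ S : Set (Fin n → ℝ), S.Nonempty ∧ IsClosed S ∧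
        asymCone {x ∈ K | ∀ j, eval x (f j) ≤ eval xbar (f j)} ⊆ asymCone S ∧
        asymCone S ⊆ asymCone K ∧
        ∀ lam : Fin q → ℝ, (∀ i, 0 ≤ lam i) → lam ≠ 0 →
          (SOLmin (asymCone S)
            (recPoly (∑ i, MvPolynomial.C (lam i) * f i))).Nonempty) ∧
    ((SOLw K (fun i x => eval x (f i))).Nonempty →
      ∃ xbar ∈ K, ∃ S : Set (Fin n → ℝ), S.Nonempty ∧ IsClosed S ∧
        asymCone {x ∈ K | ∀ j, eval x (f j) ≤ eval xbar (f j)} ⊆ asymCone S ∧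
        asymCone S ⊆ asymCone K ∧
        ∃ lam : Fin q → ℝ, (∀ i, 0 ≤ lam i) ∧ lam ≠ 0 ∧
          (SOLmin (asymCone S)
            (recPoly (∑ i, MvPolynomial.C (lam i) * f i))).Nonempty) :=
  stmt9_general K hKcl f
end
end
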